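/- Let α ≥ 1, N₂ ≥ α²/(2α−1), and g(z) = α(3α−1)z − (α−1)² sin_α(z)cos_α(z). Then N₂ g(z) − z g'(z) ≥ 0 for all z ∈ [0, π_α], and consequently g(tz)/g(z) ≥ t^{N₂} for all 0 < t ≤ 1 and 0 < z ≤ π_α. -/

import Mathlib

/-!
Writing `g' = (α+1)(α² − (α−1)² c²)` uses `s · s^(2α−1) = (s²)^α = 1 − c²`. Then
`N g − z g' = N(α−1)²(z − s c) + (α+1)(N(2α−1) − α²) z + (α+1)(α−1)² z c²`, a sum of three
nonnegative terms. This Euler-type inequality `z g' ≤ N g` says that `u ↦ g(u) u^(−N)` is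
nonincreasing on `(0, π_α]`; comparing its values at `tz` and `z` gives `g(tz) ≥ t^N g(z)`.
-/

open Set

theorem antitoneOn_mul_rpow_neg_of_mul_deriv_le {G G' : ℝ → ℝ} {D : Set ℝ} {N : ℝ}
    (hD : Convex ℝ D) (hDpos : D ⊆ Ioi 0) (hG : ∀ u ∈ D, HasDerivWithinAt G (G' u) D u)
    (hEuler : ∀ u ∈ D, u * G' u ≤ N * G u) :
    AntitoneOn (fun u => G u * u ^ (-N)) D := by
  have hF : ∀ u ∈ D, HasDerivWithinAt (fun u => G u * u ^ (-N))
      (G' u * u ^ (-N) + G u * (-N * u ^ (-N - 1))) D u := fun u hu =>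
    (hG u hu).mul (Real.hasDerivAt_rpow_const (Or.inl (hDpos hu).ne')).hasDerivWithinAt
  refine antitoneOn_of_hasDerivWithinAt_nonpos hD (fun u hu => (hF u hu).continuousWithinAt)
    (fun u hu => (hF u (interior_subset hu)).mono interior_subset) fun u hu => ?_
  have hu : u ∈ D := interior_subset hu
  have hu0 : 0 < u := hDpos hu
  have hsplit : u ^ (-N) = u ^ (-N - 1) * u := by
    rw [← Real.rpow_add_one hu0.ne', sub_add_cancel]
  calc G' u * u ^ (-N) + G u * (-N * u ^ (-N - 1))
      = u ^ (-N - 1) * (u * G' u - N * G u) := by rw [hsplit]; ring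
    _ ≤ 0 := mul_nonpos_of_nonneg_of_nonpos (Real.rpow_pos_of_pos hu0 _).le
        (sub_nonpos.mpr (hEuler u hu))

theorem rpow_mul_le_of_mul_deriv_le {G G' : ℝ → ℝ} {N t z : ℝ} (ht : t ∈ Ioc 0 1) (hz : 0 < z)
    (hG : ∀ u ∈ Icc (t * z) z, HasDerivWithinAt G (G' u) (Icc (t * z) z) u)
    (hEuler : ∀ u ∈ Icc (t * z) z, u * G' u ≤ N * G u) :
    t ^ N * G z ≤ G (t * z) := by
  have htz : 0 < t * z := mul_pos ht.1 hz
  have hle : t * z ≤ z := mul_le_of_le_one_left hz.le ht.2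
  have hanti := antitoneOn_mul_rpow_neg_of_mul_deriv_le (convex_Icc _ _)
    (fun u hu => htz.trans_le hu.1) hG hEuler
    (left_mem_Icc.mpr hle) (right_mem_Icc.mpr hle) hle
  simp only [Real.mul_rpow ht.1.le hz.le, Real.rpow_neg ht.1.le, Real.rpow_neg hz.le] at hanti
  rwa [← mul_assoc, mul_le_mul_iff_of_pos_right (inv_pos.2 (Real.rpow_pos_of_pos hz N)),
    ← div_eq_mul_inv, le_div_iff₀ (Real.rpow_pos_of_pos ht.1 N), mul_comm] at hanti

theorem mul_rpow_two_mul_sub_one {x α : ℝ} (hx : 0 ≤ x) (hα : α ≠ 0) :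
    x * x ^ (2 * α - 1) = (x ^ 2) ^ α := by
  rw [← Real.rpow_natCast_mul hx, Nat.cast_ofNat]
  conv_lhs => enter [1]; rw [← Real.rpow_one x]
  rw [← Real.rpow_add' hx (by simpa using hα), add_sub_cancel]

def gAlpha (α : ℝ) (s c : ℝ → ℝ) (z : ℝ) : ℝ := α * (3 * α - 1) * z - (α - 1) ^ 2 * s z * c z

theorem hasDerivWithinAt_gAlpha {α : ℝ} {s c : ℝ → ℝ} {S : Set ℝ} {u : ℝ} (hα : α ≠ 0)
    (hs : HasDerivWithinAt s (c u) S u)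
    (hc : HasDerivWithinAt c (-α * s u ^ (2 * α - 1)) S u) (hsu : 0 ≤ s u)
    (hpyth : (s u ^ 2) ^ α + c u ^ 2 = 1) :
    HasDerivWithinAt (gAlpha α s c) ((α + 1) * (α ^ 2 - (α - 1) ^ 2 * c u ^ 2)) S u := by
  have hd : HasDerivWithinAt (gAlpha α s c)
      (α * (3 * α - 1) * 1 -
        ((α - 1) ^ 2 * c u * c u + (α - 1) ^ 2 * s u * (-α * s u ^ (2 * α - 1)))) S u :=
    ((hasDerivWithinAt_id u S).const_mul (α * (3 * α - 1))).sub
      ((hs.const_mul ((α - 1) ^ 2)).mul hc)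
  refine hd.congr_deriv ?_
  rw [← mul_rpow_two_mul_sub_one hsu hα] at hpyth
  linear_combination (α * (α - 1) ^ 2) * hpyth

theorem mul_gAlpha_sub_mul_deriv_nonneg {α N z : ℝ} {s c : ℝ → ℝ} (hα : 1 ≤ α)
    (hN : α ^ 2 / (2 * α - 1) ≤ N) (hz : 0 ≤ z) (hsc : s z * c z ≤ z) :
    0 ≤ N * gAlpha α s c z - z * ((α + 1) * (α ^ 2 - (α - 1) ^ 2 * c z ^ 2)) := by
  have hN' : α ^ 2 ≤ N * (2 * α - 1) := (div_le_iff₀ (by linarith)).mp hN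
  have hN0 : 0 ≤ N := (div_nonneg (sq_nonneg α) (by linarith)).trans hN
  have hα1 : 0 ≤ α + 1 := by linarith
  have h1 : 0 ≤ N * (α - 1) ^ 2 * (z - s z * c z) :=
    mul_nonneg (mul_nonneg hN0 (sq_nonneg _)) (sub_nonneg.mpr hsc)
  have h2 : 0 ≤ (N * (2 * α - 1) - α ^ 2) * (α + 1) * z :=
    mul_nonneg (mul_nonneg (sub_nonneg.mpr hN') hα1) hz
  have h3 : 0 ≤ z * (α + 1) * (α - 1) ^ 2 * c z ^ 2 :=
    mul_nonneg (mul_nonneg (mul_nonneg hz hα1) (sq_nonneg _)) (sq_nonneg _)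
  unfold gAlpha
  linear_combination h1 + h2 + h3

theorem gAlpha_pos {α z : ℝ} {s c : ℝ → ℝ} (hα : 1 ≤ α) (hz : 0 < z) (hsc : s z * c z ≤ z) :
    0 < gAlpha α s c z := by
  have : (α - 1) ^ 2 * (s z * c z) ≤ (α - 1) ^ 2 * z := by gcongr
  have : 0 < (2 * α - 1) * (α + 1) * z :=
    mul_pos (mul_pos (by linarith) (by linarith)) hz
  unfold gAlpha
  linarith

theorem stmt_16_general (α : ℝ) (hα : 1 ≤ α) (N₂ : ℝ) (hN₂ : α ^ 2 / (2 * α - 1) ≤ N₂)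
    (πα : ℝ) (s c : ℝ → ℝ)
    (hs : ∀ z ∈ Icc 0 πα, HasDerivWithinAt s (c z) (Icc 0 πα) z)
    (hc : ∀ z ∈ Icc 0 πα,
      HasDerivWithinAt c (-α * s z ^ (2 * α - 1)) (Icc 0 πα) z)
    (hsnonneg : ∀ z ∈ Icc 0 πα, 0 ≤ s z)
    (hpyth : ∀ z ∈ Icc 0 πα, (s z ^ 2) ^ α + c z ^ 2 = 1)
    (hsc : ∀ z ∈ Icc 0 πα, s z * c z ≤ z) :
    (∀ z ∈ Icc 0 πα,
      N₂ * (α * (3 * α - 1) * z - (α - 1) ^ 2 * s z * c z)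
        - z * ((α + 1) * (α ^ 2 - (α - 1) ^ 2 * c z ^ 2)) ≥ 0) ∧
    (∀ t ∈ Ioc (0 : ℝ) 1, ∀ z ∈ Ioc (0 : ℝ) πα,
      (α * (3 * α - 1) * (t * z) - (α - 1) ^ 2 * s (t * z) * c (t * z)) /
          (α * (3 * α - 1) * z - (α - 1) ^ 2 * s z * c z)
        ≥ t ^ N₂) := by
  have hEuler : ∀ z ∈ Icc 0 πα,
      0 ≤ N₂ * gAlpha α s c z - z * ((α + 1) * (α ^ 2 - (α - 1) ^ 2 * c z ^ 2)) :=
    fun z hz => mul_gAlpha_sub_mul_deriv_nonneg hα hN₂ hz.1 (hsc z hz)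
  refine ⟨hEuler, fun t ht z hz => ?_⟩
  have hsub : Icc (t * z) z ⊆ Icc 0 πα :=
    Icc_subset_Icc (mul_pos ht.1 hz.1).le hz.2
  have hscaled : t ^ N₂ * gAlpha α s c z ≤ gAlpha α s c (t * z) := by
    refine rpow_mul_le_of_mul_deriv_le (G' := fun u => (α + 1) * (α ^ 2 - (α - 1) ^ 2 * c u ^ 2))
      ht hz.1 (fun u hu => ?_) fun u hu => ?_
    · exact (hasDerivWithinAt_gAlpha (by linarith) (hs u (hsub hu)) (hc u (hsub hu))
        (hsnonneg u (hsub hu)) (hpyth u (hsub hu))).mono hsub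
    · linarith [hEuler u (hsub hu)]
  exact (le_div_iff₀ (gAlpha_pos hα hz.1 (hsc z (Ioc_subset_Icc_self hz)))).2 hscaled

/-- for `α ≥ 1`, `N₂ ≥ α²/(2α−1)` and
`g(z) = α(3α−1)z − (α−1)² sin_α(z)cos_α(z)`, one has `N₂ g(z) − z g'(z) ≥ 0` on `[0, π_α]`
(with `g'(z) = (α+1)(α² − (α−1)²cos_α(z)²)`), and consequently `g(tz)/g(z) ≥ t^{N₂}` for all
`0 < t ≤ 1`, `0 < z ≤ π_α`. -/
theorem stmt_16 (α : ℝ) (hα : 1 ≤ α) (N₂ : ℝ) (hN₂ : α ^ 2 / (2 * α - 1) ≤ N₂)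
    (πα : ℝ) (hπα : 0 < πα) (s c : ℝ → ℝ)
    (hs : ∀ z ∈ Icc 0 πα, HasDerivWithinAt s (c z) (Icc 0 πα) z)
    (hc : ∀ z ∈ Icc 0 πα,
      HasDerivWithinAt c (-α * s z ^ (2 * α - 1)) (Icc 0 πα) z)
    (hs0 : s 0 = 0)
    (hsnonneg : ∀ z ∈ Icc 0 πα, 0 ≤ s z)
    (hpyth : ∀ z ∈ Icc 0 πα, (s z ^ 2) ^ α + c z ^ 2 = 1)
    (hsc : ∀ z ∈ Icc 0 πα, s z * c z ≤ z) :
    (∀ z ∈ Icc 0 πα,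
      N₂ * (α * (3 * α - 1) * z - (α - 1) ^ 2 * s z * c z)
        - z * ((α + 1) * (α ^ 2 - (α - 1) ^ 2 * c z ^ 2)) ≥ 0) ∧
    (∀ t ∈ Ioc (0 : ℝ) 1, ∀ z ∈ Ioc (0 : ℝ) πα,
      (α * (3 * α - 1) * (t * z) - (α - 1) ^ 2 * s (t * z) * c (t * z)) /
          (α * (3 * α - 1) * z - (α - 1) ^ 2 * s z * c z)
        ≥ t ^ N₂) :=
  stmt_16_general α hα N₂ hN₂ πα s c hs hc hsnonneg hpyth hsc
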